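/- Let M be a homologically monotonic monomial ideal. Then for every m ≠ 1 in the Betti poset B_M, the reduced homology H̃(Δ_m; k) is concentrated in a single degree: there exists i such that H̃_j(Δ_m; k) = 0 for all j ≠ i and H̃_i(Δ_m; k) ≠ 0. -/

import Mathlib

open scoped Classical

noncomputable section

/-- The faces of cardinality `c` of a simplicial complex `Δ` on vertex set `Fin r`
(encoded as a finite set of finite subsets of `Fin r`). -/
abbrev Face {r : ℕ} (Δ : Finset (Finset (Fin r))) (c : ℕ) : Type :=
  {s : Finset (Fin r) // s ∈ Δ ∧ s.card = c}

/-- The incidence sign of a codimension-one pair of faces: `(−1)^{position}` if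
`t ⊆ s`, and `0` otherwise. -/
def bdryCoef (k : Type*) [Field k] {r : ℕ} (s t : Finset (Fin r)) : k :=
  if t ⊆ s then (-1 : k) ^ ((s \ t).sum fun v => (s.filter fun w => w < v).card) else 0

/-- The boundary map of the (augmented, reduced) simplicial chain complex of `Δ` with
coefficients in `k`, from chains on faces of cardinality `c + 1` (dimension `c`) to
chains on faces of cardinality `c`. -/
def bdry (k : Type*) [Field k] {r : ℕ} (Δ : Finset (Finset (Fin r))) (c : ℕ) :
    (Face Δ (c + 1) → k) →ₗ[k] (Face Δ c → k) :=
  LinearMap.pi fun t => ∑ s : Face Δ (c + 1), bdryCoef k s.1 t.1 • LinearMap.proj s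

/-- Nonvanishing of the reduced homology `H̃_{c−1}(Δ; k)`, i.e. of the homology of the
reduced chain complex at the chains on faces of cardinality `c` (dimension `c − 1`). -/
def HtNonzero (k : Type*) [Field k] {r : ℕ} (Δ : Finset (Finset (Fin r))) : ℕ → Prop
  | 0 => LinearMap.range (bdry k Δ 0) ≠ ⊤
  | c + 1 => LinearMap.ker (bdry k Δ c) ≠ LinearMap.range (bdry k Δ (c + 1))

/-- The atom-support of a multidegree: the indices of generators dividing it. -/
def aSupp {n r : ℕ} (a : Fin r → (Fin n → ℕ)) (v : Fin n → ℕ) : Finset (Fin r) :=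
  Finset.univ.filter fun i => a i ≤ v

/-- The lcm-lattice of the monomial ideal generated by the monomials with exponent
vectors `a i`: all joins (componentwise sups) of subsets of the generators. -/
def latticeL {n r : ℕ} (a : Fin r → (Fin n → ℕ)) : Set (Fin n → ℕ) :=
  {v | ∃ A : Finset (Fin r), v = A.sup a}

/-- `u` is covered by `v` in the lcm-lattice. -/
def covIn {n r : ℕ} (a : Fin r → (Fin n → ℕ)) (u v : Fin n → ℕ) : Prop :=
  u ∈ latticeL a ∧ u < v ∧ ∀ w ∈ latticeL a, ¬(u < w ∧ w < v)

/-- The simplicial complex `Δ_m` at `m ≠ 1` in the lcm-lattice: the complex whose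
facets are the supports `A_{m'}` of the elements `m'` covered by `m` (this is `{∅}`
when `m` is an atom, since then the only covered element is the bottom `1`). -/
def deltaM {n r : ℕ} (a : Fin r → (Fin n → ℕ)) (m : Fin n → ℕ) :
    Finset (Finset (Fin r)) :=
  Finset.univ.filter fun s => ∃ u, covIn a u m ∧ s ⊆ aSupp a u

/-- The rank of `m` in the lcm-lattice: the maximal length of chains from the bottom
element (exponent vector `0`, the monomial `1`) to `m`. -/
def rkOf {n r : ℕ} (a : Fin r → (Fin n → ℕ)) (m : Fin n → ℕ) : ℕ :=
  sSup {K : ℕ | ∃ c : Fin (K + 1) → (Fin n → ℕ),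
    StrictMono c ∧ (∀ j, c j ∈ latticeL a) ∧ c 0 = 0 ∧ c (Fin.last K) = m}

end

/-- `M` is homologically monotonic (degrees shifted by one so as to range over `ℕ`,
including the reduced degree `−1`). -/
def HomMonotonic (k : Type*) [Field k] {n r : ℕ} (a : Fin r → (Fin n → ℕ)) : Prop :=
  ∀ m ∈ latticeL a, ∀ m' ∈ latticeL a, (0 : Fin n → ℕ) < m' → m' < m →
    ∀ i j : ℕ, HtNonzero k (deltaM a m') i → HtNonzero k (deltaM a m) j → i < j

/-!
Let `c` be the least cardinality at which `H̃_{c-1}(Δ_m)` is nonzero. By homological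
monotonicity, every `Δ_x` with `0 < x < m` in the lcm-lattice is acyclic from cardinality `c`
on. Now `Δ_m` is the union, over the lattice elements `x < m`, of the full simplices on the
supports `A_x`; adding them one at a time from the bottom up glues a simplex to the complex built
so far along exactly `Δ_x`. Simplices are acyclic, so by Mayer–Vietoris each step keeps the union
acyclic from cardinality `c + 1` on, and `H̃(Δ_m)` vanishes above `c - 1`.
-/

section ChainComplex

variable (R : Type*) [CommRing R] {r : ℕ}

def cofaceSign (t : Finset (Fin r)) (v : Fin r) : R :=
  (-1) ^ (t.filter (· < v)).card

def chainBoundary : (Finset (Fin r) → R) →ₗ[R] (Finset (Fin r) → R) where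
  toFun f t := ∑ v ∈ tᶜ, cofaceSign R t v * f (insert v t)
  map_add' f g := by
    funext t
    simp only [Pi.add_apply, mul_add, Finset.sum_add_distrib]
  map_smul' a f := by
    funext t
    simp only [Pi.smul_apply, smul_eq_mul, RingHom.id_apply, Finset.mul_sum]
    exact Finset.sum_congr rfl fun _ _ => by ring

def cone (b : Fin r) (f : Finset (Fin r) → R) (s : Finset (Fin r)) : R :=
  if b ∈ s then cofaceSign R (s.erase b) b * f (s.erase b) else 0

variable {R}

lemma chainBoundary_apply (f : Finset (Fin r) → R) (t : Finset (Fin r)) :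
    chainBoundary R f t = ∑ v ∈ tᶜ, cofaceSign R t v * f (insert v t) := rfl

lemma cofaceSign_mul_self (t : Finset (Fin r)) (v : Fin r) :
    cofaceSign R t v * cofaceSign R t v = 1 := by
  rw [cofaceSign, ← pow_add, ← two_mul, pow_mul, neg_one_sq, one_pow]

lemma cofaceSign_insert {s : Finset (Fin r)} {x : Fin r} (hx : x ∉ s) (y : Fin r) :
    cofaceSign R (insert x s) y = if x < y then -cofaceSign R s y else cofaceSign R s y := by
  rw [cofaceSign, cofaceSign, Finset.filter_insert]
  split_ifs with hxy
  · rw [Finset.card_insert_of_notMem fun h => hx (Finset.mem_filter.mp h).1, pow_succ,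
      mul_neg_one]
  · rfl

lemma cofaceSign_swap {s : Finset (Fin r)} {v w : Fin r} (hv : v ∉ s) (hw : w ∉ s)
    (hvw : v ≠ w) :
    cofaceSign R s v * cofaceSign R (insert v s) w
      = -(cofaceSign R s w * cofaceSign R (insert w s) v) := by
  rw [cofaceSign_insert hv, cofaceSign_insert hw]
  rcases hvw.lt_or_gt with h | h
  · rw [if_pos h, if_neg h.not_gt]; ring
  · rw [if_neg h.not_gt, if_pos h]; ring

lemma cofaceSign_insert_mul_insert {s : Finset (Fin r)} {v w : Fin r} (hv : v ∉ s)
    (hw : w ∉ s) (hvw : v ≠ w) :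
    cofaceSign R (insert w s) v * cofaceSign R (insert v s) w
      = -(cofaceSign R s v * cofaceSign R s w) := by
  rw [cofaceSign_insert hv, cofaceSign_insert hw]
  rcases hvw.lt_or_gt with h | h
  · rw [if_pos h, if_neg h.not_gt]; ring
  · rw [if_neg h.not_gt, if_pos h]; ring

/-- The terms of `∂ (∂ f) t`, indexed by ordered pairs of distinct vertices outside `t`,
cancel in pairs `(v, w) ↔ (w, v)`. -/
theorem chainBoundary_chainBoundary (f : Finset (Fin r) → R) :
    chainBoundary R (chainBoundary R f) = 0 := by
  funext t
  simp only [chainBoundary_apply, Finset.mul_sum, Finset.compl_insert, Pi.zero_apply]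
  rw [Finset.sum_sigma']
  refine Finset.sum_involution (fun p _ => ⟨p.2, p.1⟩) ?_ ?_ ?_ ?_
  · rintro ⟨v, w⟩ hp
    obtain ⟨hv, hw⟩ := Finset.mem_sigma.mp hp
    obtain ⟨hwv, hw⟩ := Finset.mem_erase.mp hw
    rw [Finset.mem_compl] at hv hw
    simp only
    rw [Finset.insert_comm w v t, ← mul_assoc, ← mul_assoc, ← add_mul,
      cofaceSign_swap hv hw hwv.symm, neg_add_cancel, zero_mul]
  · rintro ⟨v, w⟩ hp - h
    exact (Finset.mem_erase.mp (Finset.mem_sigma.mp hp).2).1 (congrArg Sigma.fst h)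
  · rintro ⟨v, w⟩ hp
    obtain ⟨hv, hw⟩ := Finset.mem_sigma.mp hp
    obtain ⟨hwv, hw⟩ := Finset.mem_erase.mp hw
    exact Finset.mem_sigma.mpr ⟨hw, Finset.mem_erase.mpr ⟨hwv.symm, hv⟩⟩
  · intros
    rfl

theorem chainBoundary_cone_add_cone_chainBoundary (b : Fin r) (f : Finset (Fin r) → R) :
    chainBoundary R (cone R b f) + cone R b (chainBoundary R f) = f := by
  funext t
  simp only [Pi.add_apply, chainBoundary_apply, cone]
  by_cases hb : b ∈ t
  · set t' := t.erase b
    have hbt' : b ∉ t' := Finset.notMem_erase b t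
    have ht : insert b t' = t := Finset.insert_erase hb
    rw [if_pos hb, Finset.compl_erase, Finset.sum_insert (fun h => Finset.mem_compl.mp h hb),
      ht, mul_add, ← mul_assoc, cofaceSign_mul_self, one_mul, Finset.mul_sum,
      add_left_comm, ← Finset.sum_add_distrib, add_eq_left]
    refine Finset.sum_eq_zero fun v hv => ?_
    have hvt : v ∉ t := Finset.mem_compl.mp hv
    have hvb : v ≠ b := fun h => hvt (h ▸ hb)
    have hvt' : v ∉ t' := fun h => hvt (Finset.mem_of_mem_erase h)
    have hsign := cofaceSign_insert_mul_insert (R := R) hvt' hbt' hvb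
    rw [ht] at hsign
    rw [if_pos (Finset.mem_insert_of_mem hb), Finset.erase_insert_of_ne hvb, ← mul_assoc,
      ← mul_assoc, ← add_mul, hsign, mul_comm (cofaceSign R t' b), neg_add_cancel, zero_mul]
  · rw [if_neg hb, add_zero, Finset.sum_eq_single_of_mem b (Finset.mem_compl.mpr hb)]
    · rw [if_pos (Finset.mem_insert_self b t), Finset.erase_insert hb, ← mul_assoc,
        cofaceSign_mul_self, one_mul]
    · intro v _ hvb
      rw [if_neg fun h => hb ((Finset.mem_insert.mp h).resolve_left (Ne.symm hvb)), mul_zero]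

end ChainComplex

section Exactness

variable (R : Type*) [CommRing R] {r : ℕ}

/-- Chains of `Δ` of cardinality `c`, as functions on all finsets, so that every complex
shares the one boundary map `chainBoundary`. -/
def chains (Δ : Finset (Finset (Fin r))) (c : ℕ) : Submodule R (Finset (Fin r) → R) where
  carrier := {f | ∀ s, f s ≠ 0 → s ∈ Δ ∧ s.card = c}
  add_mem' {f g} hf hg s hs := by
    by_cases hfs : f s = 0
    · exact hg s (by simpa [hfs] using hs)
    · exact hf s hfs
  zero_mem' s hs := absurd rfl hs
  smul_mem' a f hf s hs := hf s fun h => hs (by simp [h])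

/-- Vanishing of `H̃_{c-1}(Δ; R)`. -/
def ExactAt (Δ : Finset (Finset (Fin r))) (c : ℕ) : Prop :=
  ∀ f ∈ chains R Δ c, chainBoundary R f = 0 → ∃ g ∈ chains R Δ (c + 1), chainBoundary R g = f

variable {R} {Δ Γ : Finset (Finset (Fin r))} {c : ℕ}

lemma mem_chains {f : Finset (Fin r) → R} :
    f ∈ chains R Δ c ↔ ∀ s, f s ≠ 0 → s ∈ Δ ∧ s.card = c := Iff.rfl

lemma chains_mono (h : Δ ⊆ Γ) : chains R Δ c ≤ chains R Γ c :=
  fun _ hf s hs => ⟨h (hf s hs).1, (hf s hs).2⟩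

lemma chains_inter : chains R (Δ ∩ Γ) c = chains R Δ c ⊓ chains R Γ c := by
  ext f
  simp only [Submodule.mem_inf, mem_chains, Finset.mem_inter]
  exact ⟨fun h => ⟨fun s hs => ⟨(h s hs).1.1, (h s hs).2⟩, fun s hs => ⟨(h s hs).1.2, (h s hs).2⟩⟩,
    fun h s hs => ⟨⟨(h.1 s hs).1, (h.2 s hs).1⟩, (h.1 s hs).2⟩⟩

lemma eq_zero_of_mem_chains (h : ∀ s ∈ Δ, s.card ≠ c) {f : Finset (Fin r) → R}
    (hf : f ∈ chains R Δ c) : f = 0 :=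
  funext fun s => by_contra fun hs => h s (hf s hs).1 (hf s hs).2

lemma chainBoundary_mem_chains (hΔ : IsLowerSet (Δ : Set (Finset (Fin r))))
    {f : Finset (Fin r) → R} (hf : f ∈ chains R Δ (c + 1)) :
    chainBoundary R f ∈ chains R Δ c := by
  intro t ht
  obtain ⟨v, hv, hne⟩ := Finset.exists_ne_zero_of_sum_ne_zero ht
  obtain ⟨hmem, hcard⟩ := hf _ (right_ne_zero_of_mul hne)
  refine ⟨hΔ (Finset.subset_insert v t) hmem, ?_⟩
  rwa [Finset.card_insert_of_notMem (Finset.mem_compl.mp hv), Nat.add_right_cancel_iff]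
    at hcard

lemma chainBoundary_eq_zero_of_mem_chains_zero {f : Finset (Fin r) → R}
    (hf : f ∈ chains R Δ 0) : chainBoundary R f = 0 := by
  funext t
  refine Finset.sum_eq_zero fun v _ => ?_
  have : f (insert v t) = 0 := by_contra fun h =>
    (Finset.insert_nonempty v t).ne_empty (Finset.card_eq_zero.mp (hf _ h).2)
  rw [this, mul_zero]

lemma exactAt_of_forall_card_ne (h : ∀ s ∈ Δ, s.card ≠ c) : ExactAt R Δ c :=
  fun f hf _ => ⟨0, zero_mem _, by rw [map_zero, eq_zero_of_mem_chains h hf]⟩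

theorem exactAt_of_insert_mem {b : Fin r} (hb : ∀ t ∈ Δ, insert b t ∈ Δ) : ExactAt R Δ c := by
  intro f hf hf0
  refine ⟨cone R b f, fun s hs => ?_, ?_⟩
  · have hbs : b ∈ s := by by_contra h; simp [cone, h] at hs
    obtain ⟨hmem, hcard⟩ := hf _ (right_ne_zero_of_mul (by simpa [cone, hbs] using hs))
    refine ⟨Finset.insert_erase hbs ▸ hb _ hmem, ?_⟩
    rw [← hcard, Finset.card_erase_of_mem hbs, Nat.sub_add_cancel (Finset.card_pos.mpr ⟨b, hbs⟩)]
  · have h := chainBoundary_cone_add_cone_chainBoundary b f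
    rwa [hf0, show cone R b 0 = 0 from funext fun s => by simp [cone], add_zero] at h

lemma exactAt_powerset_succ (B : Finset (Fin r)) (c : ℕ) : ExactAt R B.powerset (c + 1) := by
  rcases B.eq_empty_or_nonempty with rfl | ⟨b, hb⟩
  · refine exactAt_of_forall_card_ne fun s hs => ?_
    rw [Finset.mem_powerset, Finset.subset_empty] at hs
    simp [hs]
  · exact exactAt_of_insert_mem fun t ht =>
      Finset.mem_powerset.mpr (Finset.insert_subset hb (Finset.mem_powerset.mp ht))

/-- Mayer–Vietoris: split a cycle `f` on `Δ ∪ Γ` as `f = fΔ + fΓ` with `fΔ` supported on `Δ`;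
then `∂ fΓ = -∂ fΔ` is a cycle on `Δ ∩ Γ`, and the three exactness hypotheses are applied in
turn. -/
theorem exactAt_union (hΔ : IsLowerSet (Δ : Set (Finset (Fin r))))
    (hΓ : IsLowerSet (Γ : Set (Finset (Fin r)))) (hΔc : ExactAt R Δ (c + 1))
    (hΓc : ExactAt R Γ (c + 1)) (hΔΓ : ExactAt R (Δ ∩ Γ) c) : ExactAt R (Δ ∪ Γ) (c + 1) := by
  intro f hf hf0
  set fΔ : Finset (Fin r) → R := fun s => if s ∈ Δ then f s else 0
  have hfΔ : fΔ ∈ chains R Δ (c + 1) := fun s hs => by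
    by_cases h : s ∈ Δ
    · exact ⟨h, (hf s (by simpa [fΔ, h] using hs)).2⟩
    · simp [fΔ, h] at hs
  have hfΓ : f - fΔ ∈ chains R Γ (c + 1) := fun s hs => by
    by_cases h : s ∈ Δ
    · simp [fΔ, h] at hs
    · obtain ⟨hmem, hcard⟩ := hf s (by simpa [fΔ, h] using hs)
      exact ⟨(Finset.mem_union.mp hmem).resolve_left h, hcard⟩
  have hw : chainBoundary R (f - fΔ) ∈ chains R (Δ ∩ Γ) c := by
    rw [chains_inter]
    refine ⟨?_, chainBoundary_mem_chains hΓ hfΓ⟩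
    rw [map_sub, hf0, zero_sub]
    exact neg_mem (chainBoundary_mem_chains hΔ hfΔ)
  obtain ⟨v, hv, hvw⟩ := hΔΓ _ hw (chainBoundary_chainBoundary _)
  rw [chains_inter] at hv
  obtain ⟨g, hg, hgv⟩ := hΓc (f - fΔ - v) (sub_mem hfΓ hv.2) (by rw [map_sub, hvw, sub_self])
  obtain ⟨h, hh, hhv⟩ := hΔc (fΔ + v) (add_mem hfΔ hv.1)
    (by rw [map_add, hvw, ← map_add, add_sub_cancel, hf0])
  refine ⟨h + g, add_mem (chains_mono Finset.subset_union_left hh)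
    (chains_mono Finset.subset_union_right hg), ?_⟩
  rw [map_add, hhv, hgv]
  abel

end Exactness

section ReducedHomology

variable {k : Type*} [Field k] {r : ℕ} {Δ : Finset (Finset (Fin r))} {c : ℕ}

variable (k Δ c) in
noncomputable def extendFace : (Face Δ c → k) →ₗ[k] (Finset (Fin r) → k) :=
  Function.ExtendByZero.linearMap k Subtype.val

lemma extendFace_apply_val (z : Face Δ c → k) (s : Face Δ c) : extendFace k Δ c z s.1 = z s := by
  rw [extendFace, Function.ExtendByZero.linearMap_apply]
  exact Subtype.val_injective.extend_apply z (0 : Finset (Fin r) → k) s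

lemma extendFace_apply_of_not_mem (z : Face Δ c → k) {s : Finset (Fin r)}
    (hs : ¬(s ∈ Δ ∧ s.card = c)) : extendFace k Δ c z s = 0 := by
  rw [extendFace, Function.ExtendByZero.linearMap_apply]
  exact Function.extend_apply' z (0 : Finset (Fin r) → k) s fun ⟨t, ht⟩ => hs (ht ▸ t.2)

lemma extendFace_mem_chains (z : Face Δ c → k) : extendFace k Δ c z ∈ chains k Δ c :=
  fun _ hs => by_contra fun h => hs (extendFace_apply_of_not_mem z h)

lemma extendFace_injective : Function.Injective (extendFace k Δ c) := fun z w h =>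
  funext fun s => by rw [← extendFace_apply_val z s, h, extendFace_apply_val]

lemma extendFace_restrict {f : Finset (Fin r) → k} (hf : f ∈ chains k Δ c) :
    extendFace k Δ c (fun s => f s.1) = f := by
  funext s
  by_cases hs : s ∈ Δ ∧ s.card = c
  · exact extendFace_apply_val (Δ := Δ) _ ⟨s, hs⟩
  · rw [extendFace_apply_of_not_mem _ hs]
    exact by_contra fun h => hs (hf s (Ne.symm h))

lemma bdryCoef_insert {t : Finset (Fin r)} {v : Fin r} (hv : v ∉ t) :
    bdryCoef k (insert v t) t = cofaceSign k t v := by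
  rw [bdryCoef, if_pos (Finset.subset_insert v t), Finset.insert_sdiff_cancel hv,
    Finset.sum_singleton, Finset.filter_insert, if_neg (lt_irrefl v), cofaceSign]

lemma sum_eq_sum_compl_insert {M : Type*} [AddCommMonoid M] {t : Finset (Fin r)}
    {g : Finset (Fin r) → M} (hg : ∀ s, g s ≠ 0 → t ⊆ s ∧ s.card = t.card + 1) :
    ∑ s, g s = ∑ v ∈ tᶜ, g (insert v t) := by
  symm
  refine Finset.sum_bij_ne_zero (fun v _ _ => insert v t) (fun _ _ _ => Finset.mem_univ _)
    (fun v hv _ w hw _ h => ?_) (fun s _ hs => ?_) (fun _ _ _ => rfl)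
  · have := h ▸ Finset.mem_insert_self v t
    exact (Finset.mem_insert.mp this).resolve_right (Finset.mem_compl.mp hv)
  · obtain ⟨hts, hcard⟩ := hg s hs
    obtain ⟨v, hv, hs⟩ : ∃ v ∉ t, insert v t = s := by
      simpa [eq_comm] using Finset.covBy_iff_exists_insert.mp
        ((Finset.covBy_iff_card_sdiff_eq_one).mpr ⟨hts, by
          rw [Finset.card_sdiff_of_subset hts, hcard, Nat.add_sub_cancel_left]⟩)
    exact ⟨v, Finset.mem_compl.mpr hv, by rwa [hs], hs⟩

lemma bdry_apply (z : Face Δ (c + 1) → k) (t : Face Δ c) :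
    bdry k Δ c z t = ∑ s, bdryCoef k s t.1 * extendFace k Δ (c + 1) z s := by
  simp only [bdry, LinearMap.pi_apply, LinearMap.coe_sum, LinearMap.coe_smul,
    LinearMap.coe_proj, Finset.sum_apply, Pi.smul_apply, Function.eval, smul_eq_mul]
  calc ∑ s : Face Δ (c + 1), bdryCoef k s.1 t.1 * z s
      = ∑ s : Face Δ (c + 1), bdryCoef k s.1 t.1 * extendFace k Δ (c + 1) z s.1 := by
        simp only [extendFace_apply_val]
    _ = ∑ s with s ∈ Δ ∧ s.card = c + 1, bdryCoef k s t.1 * extendFace k Δ (c + 1) z s :=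
        (Finset.sum_subtype (p := fun s => s ∈ Δ ∧ s.card = c + 1) _ (fun _ => by simp)
          fun s => bdryCoef k s t.1 * extendFace k Δ (c + 1) z s).symm
    _ = _ := Finset.sum_filter_of_ne fun s _ hs =>
        by_contra fun h => hs (by rw [extendFace_apply_of_not_mem _ h, mul_zero])

theorem extendFace_bdry (hΔ : IsLowerSet (Δ : Set (Finset (Fin r)))) (z : Face Δ (c + 1) → k) :
    extendFace k Δ c (bdry k Δ c z) = chainBoundary k (extendFace k Δ (c + 1) z) := by
  funext t
  by_cases ht : t ∈ Δ ∧ t.card = c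
  · rw [extendFace_apply_val (s := ⟨t, ht⟩), bdry_apply, chainBoundary_apply,
      sum_eq_sum_compl_insert fun s hs => ?_]
    · exact Finset.sum_congr rfl fun v hv => by rw [bdryCoef_insert (Finset.mem_compl.mp hv)]
    · refine ⟨by_contra fun h => hs ?_, ?_⟩
      · rw [bdryCoef, if_neg h, zero_mul]
      · rw [(extendFace_mem_chains z s (right_ne_zero_of_mul hs)).2, ht.2]
  · rw [extendFace_apply_of_not_mem _ ht]
    exact by_contra fun h =>
      ht (chainBoundary_mem_chains hΔ (extendFace_mem_chains z) t (Ne.symm h))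

lemma exactAt_iff_forall_mem_range (hΔ : IsLowerSet (Δ : Set (Finset (Fin r)))) :
    ExactAt k Δ c ↔ ∀ w : Face Δ c → k,
      chainBoundary k (extendFace k Δ c w) = 0 → w ∈ LinearMap.range (bdry k Δ c) := by
  constructor
  · intro h w hw
    obtain ⟨g, hg, hgw⟩ := h _ (extendFace_mem_chains w) hw
    refine ⟨fun s => g s.1, extendFace_injective ?_⟩
    rw [extendFace_bdry hΔ, extendFace_restrict hg, hgw]
  · intro h f hf hf0
    obtain ⟨y, hy⟩ := h (fun s => f s.1) (by rwa [extendFace_restrict hf])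
    exact ⟨_, extendFace_mem_chains y, by rw [← extendFace_bdry hΔ, hy, extendFace_restrict hf]⟩

theorem htNonzero_iff_not_exactAt (hΔ : IsLowerSet (Δ : Set (Finset (Fin r)))) (c : ℕ) :
    HtNonzero k Δ c ↔ ¬ExactAt k Δ c := by
  rw [exactAt_iff_forall_mem_range hΔ]
  cases c with
  | zero =>
    simp only [HtNonzero, ne_eq, not_iff_not, Submodule.eq_top_iff']
    exact forall_congr' fun w =>
      (imp_iff_right (chainBoundary_eq_zero_of_mem_chains_zero (extendFace_mem_chains w))).symm
  | succ c =>
    have hker (w) : chainBoundary k (extendFace k Δ (c + 1) w) = 0 ↔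
        w ∈ LinearMap.ker (bdry k Δ c) := by
      rw [LinearMap.mem_ker, ← extendFace_bdry hΔ, ← map_zero (extendFace k Δ c),
        extendFace_injective.eq_iff]
    have hrange : LinearMap.range (bdry k Δ (c + 1)) ≤ LinearMap.ker (bdry k Δ c) := by
      rintro _ ⟨y, rfl⟩
      rw [← hker, extendFace_bdry hΔ, chainBoundary_chainBoundary]
    simp only [HtNonzero, hker, ne_eq, not_iff_not]
    exact ⟨fun h w hw => h ▸ hw, fun h => le_antisymm h hrange⟩

end ReducedHomology

section LcmLattice

variable {R : Type*} [CommRing R] {n r : ℕ} (a : Fin r → (Fin n → ℕ))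

lemma latticeL_finite : (latticeL a).Finite :=
  (Set.finite_range fun A : Finset (Fin r) => A.sup a).subset fun _ ⟨A, hA⟩ => ⟨A, hA.symm⟩

lemma exists_covIn_of_lt {m w : Fin n → ℕ} (hw : w ∈ latticeL a) (hwm : w < m) :
    ∃ u, covIn a u m ∧ w ≤ u := by
  obtain ⟨u, ⟨huL, hwu, hum⟩, hmax⟩ :=
    ((latticeL_finite a).subset (t := {u | u ∈ latticeL a ∧ w ≤ u ∧ u < m})
      fun _ hu => hu.1).exists_maximal ⟨w, hw, le_rfl, hwm⟩
  exact ⟨u, ⟨huL, hum, fun v hv ⟨huv, hvm⟩ =>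
    huv.not_ge (hmax ⟨hv, hwu.trans huv.le, hvm⟩ huv.le)⟩, hwu⟩

lemma subset_aSupp_iff {s : Finset (Fin r)} {v : Fin n → ℕ} :
    s ⊆ aSupp a v ↔ s.sup a ≤ v := by
  simp [Finset.subset_iff, aSupp, Finset.sup_le_iff]

lemma isLowerSet_deltaM (m : Fin n → ℕ) : IsLowerSet (deltaM a m : Set (Finset (Fin r))) :=
  fun s t hts hs => by
    simp only [Finset.mem_coe, deltaM, Finset.mem_filter, Finset.mem_univ, true_and] at hs ⊢
    obtain ⟨u, hu, hsu⟩ := hs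
    exact ⟨u, hu, hts.trans hsu⟩

lemma deltaM_zero : deltaM a 0 = ∅ := by
  ext s
  simp only [deltaM, Finset.mem_filter, Finset.mem_univ, true_and, Finset.notMem_empty,
    iff_false, not_exists, not_and]
  exact fun u hu => absurd (fun _ => Nat.zero_le _) hu.2.1.not_ge

noncomputable def supportComplex (S : Finset (Fin n → ℕ)) : Finset (Finset (Fin r)) :=
  Finset.univ.filter fun s => ∃ x ∈ S, s ⊆ aSupp a x

lemma isLowerSet_supportComplex (S : Finset (Fin n → ℕ)) :
    IsLowerSet (supportComplex a S : Set (Finset (Fin r))) := fun s t hts hs => by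
  simp only [Finset.mem_coe, supportComplex, Finset.mem_filter, Finset.mem_univ,
    true_and] at hs ⊢
  obtain ⟨x, hx, hsx⟩ := hs
  exact ⟨x, hx, hts.trans hsx⟩

lemma supportComplex_empty : supportComplex a ∅ = ∅ := by
  simp [supportComplex]

lemma supportComplex_insert (x : Fin n → ℕ) (S : Finset (Fin n → ℕ)) :
    supportComplex a (insert x S) = supportComplex a S ∪ (aSupp a x).powerset := by
  ext s
  simp [supportComplex, or_comm]

lemma supportComplex_inter_powerset {x : Fin n → ℕ} {S : Finset (Fin n → ℕ)}
    (hbelow : ∀ y ∈ latticeL a, y < x → y ∈ S) (hnot : ∀ y ∈ S, ¬x ≤ y) :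
    supportComplex a S ∩ (aSupp a x).powerset = deltaM a x := by
  ext s
  simp only [supportComplex, deltaM, Finset.mem_inter, Finset.mem_filter, Finset.mem_univ,
    true_and, Finset.mem_powerset, subset_aSupp_iff]
  constructor
  · rintro ⟨⟨y, hy, hsy⟩, hsx⟩
    have hlt : s.sup a < x := hsx.lt_of_ne fun h => hnot y hy (h ▸ hsy)
    exact exists_covIn_of_lt a ⟨s, rfl⟩ hlt
  · rintro ⟨u, hu, hsu⟩
    exact ⟨⟨u, hbelow u hu.1 hu.2.1, hsu⟩, hsu.trans hu.2.1.le⟩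

lemma deltaM_eq_supportComplex (m : Fin n → ℕ) :
    deltaM a m = supportComplex a ((latticeL_finite a).toFinset.filter (· < m)) := by
  ext s
  simp only [supportComplex, deltaM, Finset.mem_filter, Finset.mem_univ, true_and,
    Set.Finite.mem_toFinset, subset_aSupp_iff]
  constructor
  · rintro ⟨u, hu, hsu⟩
    exact ⟨u, ⟨hu.1, hu.2.1⟩, hsu⟩
  · rintro ⟨x, ⟨hx, hxm⟩, hsx⟩
    obtain ⟨u, hu, hxu⟩ := exists_covIn_of_lt a hx hxm
    exact ⟨u, hu, hsx.trans hxu⟩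

theorem exactAt_supportComplex_succ {m : Fin n → ℕ} {i : ℕ}
    (hbelow : ∀ x ∈ latticeL a, x < m → ∀ c ≥ i, ExactAt R (deltaM a x) c)
    (S : Finset (Fin n → ℕ)) (hSm : ∀ x ∈ S, x ∈ latticeL a ∧ x < m)
    (hS : ∀ x ∈ S, ∀ y ∈ latticeL a, y ≤ x → y ∈ S) :
    ∀ c ≥ i, ExactAt R (supportComplex a S) (c + 1) := by
  induction S using Finset.strongInduction with
  | H S ih =>
  rcases S.eq_empty_or_nonempty with rfl | hne
  · intro c _
    rw [supportComplex_empty]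
    exact exactAt_of_forall_card_ne (by simp)
  obtain ⟨x, hxS, hxmax⟩ := Finset.exists_maximal hne
  have hbelow' : ∀ y ∈ latticeL a, y < x → y ∈ S.erase x := fun y hy hyx =>
    Finset.mem_erase.mpr ⟨hyx.ne, hS x hxS y hy hyx.le⟩
  have hnot : ∀ y ∈ S.erase x, ¬x ≤ y := fun y hy hxy =>
    (Finset.mem_erase.mp hy).1 (le_antisymm (hxmax (Finset.mem_of_mem_erase hy) hxy) hxy)
  have ih' := ih (S.erase x) (Finset.erase_ssubset hxS)
    (fun y hy => hSm y (Finset.mem_of_mem_erase hy))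
    (fun y hy z hz hzy => Finset.mem_erase.mpr
      ⟨fun h => hnot y hy (h ▸ hzy), hS y (Finset.mem_of_mem_erase hy) z hz hzy⟩)
  intro c hc
  rw [← Finset.insert_erase hxS, supportComplex_insert]
  refine exactAt_union (isLowerSet_supportComplex a _)
    (fun s t hts hs => Finset.mem_powerset.mpr (hts.trans (Finset.mem_powerset.mp hs)))
    (ih' c hc) (exactAt_powerset_succ _ c) ?_
  rw [supportComplex_inter_powerset a hbelow' hnot]
  exact hbelow x (hSm x hxS).1 (hSm x hxS).2 c hc

theorem exactAt_deltaM_succ {m : Fin n → ℕ} {i : ℕ}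
    (hbelow : ∀ x ∈ latticeL a, x < m → ∀ c ≥ i, ExactAt R (deltaM a x) c) :
    ∀ c ≥ i, ExactAt R (deltaM a m) (c + 1) := by
  rw [deltaM_eq_supportComplex]
  refine exactAt_supportComplex_succ a hbelow _ (fun x hx => by simpa using hx) ?_
  intro x hx y hy hyx
  simp only [Finset.mem_filter, Set.Finite.mem_toFinset] at hx ⊢
  exact ⟨hy, hyx.trans_lt hx.2⟩

end LcmLattice

lemma HomMonotonic.exactAt_deltaM {k : Type*} [Field k] {n r : ℕ} {a : Fin r → (Fin n → ℕ)}
    (hHM : HomMonotonic k a) {m : Fin n → ℕ} (hm : m ∈ latticeL a) {i : ℕ}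
    (hi : HtNonzero k (deltaM a m) i) {x : Fin n → ℕ} (hx : x ∈ latticeL a) (hxm : x < m)
    {c : ℕ} (hc : i ≤ c) : ExactAt k (deltaM a x) c := by
  rcases eq_or_ne x 0 with rfl | hx0
  · rw [deltaM_zero]
    exact exactAt_of_forall_card_ne (by simp)
  by_contra h
  have := hHM m hm x hx (lt_of_le_of_ne (fun _ => Nat.zero_le _) hx0.symm) hxm c i
    ((htNonzero_iff_not_exactAt (isLowerSet_deltaM a x) c).mpr h) hi
  omega

theorem homMonotonic_homology_concentrated_general (k : Type*) [Field k] {n r : ℕ}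
    (a : Fin r → (Fin n → ℕ))
    (hHM : HomMonotonic k a) :
    ∀ m ∈ latticeL a, m ≠ 0 → (∃ c, HtNonzero k (deltaM a m) c) →
      ∃ c, HtNonzero k (deltaM a m) c ∧
        ∀ c', c' ≠ c → ¬ HtNonzero k (deltaM a m) c' := by
  intro m hm _ hex
  refine ⟨Nat.find hex, Nat.find_spec hex, fun c' hne hc' => ?_⟩
  have hlt : Nat.find hex < c' := (Nat.find_min' hex hc').lt_of_ne hne.symm
  obtain ⟨c, rfl⟩ : ∃ c, c' = c + 1 := ⟨c' - 1, by omega⟩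
  refine (htNonzero_iff_not_exactAt (isLowerSet_deltaM a m) (c + 1)).mp hc' ?_
  exact exactAt_deltaM_succ a
    (fun x hx hxm _ hc => hHM.exactAt_deltaM hm (Nat.find_spec hex) hx hxm hc) c (by omega)

/-- Let `M` be a homologically monotonic monomial ideal.  Then for
every `m ≠ 1` in the Betti poset `B_M` (i.e. every `m ≠ 1` in `L_M` with
`H̃(Δ_m; k) ≠ 0`), the reduced homology of `Δ_m` is concentrated in a single degree:
there is a unique `c` with `H̃_{c−1}(Δ_m; k) ≠ 0`. -/
theorem homMonotonic_homology_concentrated (k : Type*) [Field k] {n r : ℕ}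
    (a : Fin r → (Fin n → ℕ)) (hmin : ∀ i j, i ≠ j → ¬ a i ≤ a j)
    (hHM : HomMonotonic k a) :
    ∀ m ∈ latticeL a, m ≠ 0 → (∃ c, HtNonzero k (deltaM a m) c) →
      ∃ c, HtNonzero k (deltaM a m) c ∧
        ∀ c', c' ≠ c → ¬ HtNonzero k (deltaM a m) c' :=
  homMonotonic_homology_concentrated_general k a hHM
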